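/- Let $X$ be a random vector in $\mathbb{R}^d$ and $Y$ a discrete random variable with finite entropy. Let $r_{n-1}: \mathbb{R}^d \to \{1,\dots,n-1\}$ and $r_n: \mathbb{R}^d \to \{1,\dots,n\}$ be measurable routers, and let $A^{(n-1)}_j, A^{(n)}_e \in \mathbb{R}^{d\times d}$ be fixed linear maps. Define $Z_{n-1} = A^{(n-1)}_{r_{n-1}(X)} X$ and $Z_n = A^{(n)}_{r_n(X)} X$. Assume (i) for each $e$ there exists $R_e \in \mathbb{R}^{d\times d}$ such that $A^{(n-1)}_{r_{n-1}(x)} x = R_e A^{(n)}_e x$ for all $x$ in the support of $X$ conditioned on $r_n(X) = e$; and (ii) there exists a measurable $\hat{e}: \mathbb{R}^d \to \{1,\dots,n\}$ with $r_n(X) = \hat{e}(Z_n)$ almost surely. Then $I(Y; Z_n) \geq I(Y; Z_{n-1})$. -/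

import Mathlib

/-!
By identifiability, `rn X = ê(Zₙ)` almost surely, and on almost every fibre `{rn X = e}` the
point `X` lies in the support of its conditional law, where the factorization applies. Hence
`Zₙ₋₁ = R_{ê(Zₙ)} Zₙ` almost surely: `Zₙ₋₁` is a.s. a measurable function of `Zₙ`. Conditioning
on the coarser σ-algebra generated by `Zₙ₋₁` can only raise the conditional entropy of `Y`, by the
conditional Jensen inequality for the concave function `x ↦ -x log x` applied to
`P(Y = y ∣ Zₙ)` and the tower property.
-/

open MeasureTheory ProbabilityTheory Real Matrix

noncomputable def mEntropyOf {S : Type*} [Fintype S] [MeasurableSpace S]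
    (ν : Measure S) : ℝ :=
  ∑ y, Real.negMulLog ((ν {y}).toReal)

noncomputable def mEntropy {Ω S : Type*} [MeasurableSpace Ω] [Fintype S] [MeasurableSpace S]
    (μ : Measure Ω) (Y : Ω → S) : ℝ :=
  mEntropyOf (μ.map Y)

noncomputable def mCondEntropy {Ω β S : Type*} [MeasurableSpace Ω] [MeasurableSpace β]
    [Fintype S] [MeasurableSpace S] [DiscreteMeasurableSpace S] [Nonempty S]
    (μ : Measure Ω) [IsFiniteMeasure μ] (Y : Ω → S) (Z : Ω → β) : ℝ :=
  ∫ z, mEntropyOf ((condDistrib Y Z μ) z) ∂(μ.map Z)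

/-- Mutual information `I(Y ; Z) = H(Y) - H(Y ∣ Z)` for a finite-valued `Y`. -/
noncomputable def mMutualInfo {Ω β S : Type*} [MeasurableSpace Ω] [MeasurableSpace β]
    [Fintype S] [MeasurableSpace S] [DiscreteMeasurableSpace S] [Nonempty S]
    (μ : Measure Ω) [IsFiniteMeasure μ] (Y : Ω → S) (Z : Ω → β) : ℝ :=
  mEntropy μ Y - mCondEntropy μ Y Z

/-- Topological support of a measure: points all of whose open neighbourhoods have
positive measure. -/
def measSupport {α : Type*} [TopologicalSpace α] [MeasurableSpace α] (ν : Measure α) : Set α :=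
  {x | ∀ U : Set α, IsOpen U → x ∈ U → 0 < ν U}

open Filter Set

section Support

variable {α : Type*} [TopologicalSpace α] [MeasurableSpace α]

lemma measSupport_eq_support (ν : Measure α) : measSupport ν = ν.support := by
  ext x
  simp only [measSupport, Measure.support_eq_forall_isOpen, mem_ofPred_eq]
  exact forall_congr' fun _ => Imp.swap

lemma ae_mem_measSupport_map [HereditarilyLindelofSpace α] {Ω : Type*} [MeasurableSpace Ω]
    {ν : Measure Ω} {X : Ω → α} (hX : AEMeasurable X ν) :
    ∀ᵐ ω ∂ν, X ω ∈ measSupport (ν.map X) := by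
  rw [measSupport_eq_support]
  exact ae_of_ae_map hX (p := (· ∈ (ν.map X).support)) Measure.support_mem_ae

end Support

lemma ae_of_forall_ae_cond_fiber {Ω ι : Type*} [MeasurableSpace Ω] [Countable ι]
    [MeasurableSpace ι] [MeasurableSingletonClass ι] {μ : Measure Ω} [IsFiniteMeasure μ]
    {r : Ω → ι} (hr : Measurable r) {p : ι → Ω → Prop}
    (h : ∀ e, ∀ᵐ ω ∂μ[|r ⁻¹' {e}], p e ω) : ∀ᵐ ω ∂μ, p (r ω) ω := by
  have hcover : (⋃ e, r ⁻¹' {e}) = univ := iUnion_eq_univ_iff.2 fun ω => ⟨r ω, rfl⟩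
  rw [← Measure.restrict_univ (μ := μ), ← hcover, ae_restrict_iUnion_iff]
  intro e
  have hrestrict : ∀ᵐ ω ∂μ.restrict (r ⁻¹' {e}), p e ω :=
    (Measure.ae_ennreal_smul_measure_iff (ENNReal.inv_ne_zero.2 (measure_ne_top μ _))).1 (h e)
  filter_upwards [hrestrict, ae_restrict_mem (hr (measurableSet_singleton e))] with ω hp hω
  rwa [show r ω = e from hω]

lemma measurable_mulVec_comp {Ω ι m n : Type*} [MeasurableSpace Ω] [Countable ι]
    [MeasurableSpace ι] [MeasurableSingletonClass ι] [Fintype n]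
    (M : ι → Matrix m n ℝ) {e : Ω → ι} (he : Measurable e) {v : Ω → n → ℝ} (hv : Measurable v) :
    Measurable fun ω => (M (e ω)).mulVec (v ω) := by
  rw [measurable_pi_iff]
  intro i
  exact Finset.measurable_sum _ fun j _ =>
    ((measurable_of_countable fun k => M k i j).comp he).mul ((measurable_pi_apply j).comp hv)

section NegMulLog

variable {Ω : Type*} {m m₁ m₂ m0 : MeasurableSpace Ω} {μ : Measure Ω} [IsFiniteMeasure μ]
  {f : Ω → ℝ}

lemma abs_negMulLog_le_one {x : ℝ} (h0 : 0 ≤ x) (h1 : x ≤ 1) : |negMulLog x| ≤ 1 := by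
  rw [abs_of_nonneg (negMulLog_nonneg h0 h1)]
  linarith [negMulLog_le_one_sub_self h0]

lemma integrable_negMulLog_comp (hf : AEStronglyMeasurable f μ)
    (h01 : ∀ᵐ ω ∂μ, f ω ∈ Icc 0 1) : Integrable (fun ω => negMulLog (f ω)) μ :=
  (integrable_const 1).mono' (continuous_negMulLog.comp_aestronglyMeasurable hf) <|
    h01.mono fun _ h => by rw [Real.norm_eq_abs]; exact abs_negMulLog_le_one h.1 h.2

lemma integral_negMulLog_le_integral_negMulLog_condExp (hm : m ≤ m0) (hf : Integrable f μ)
    (h01 : ∀ᵐ ω ∂μ, f ω ∈ Icc 0 1) :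
    ∫ ω, negMulLog (f ω) ∂μ ≤ ∫ ω, negMulLog ((μ[f|m]) ω) ∂μ := by
  have hφf := integrable_negMulLog_comp hf.1 h01
  calc ∫ ω, negMulLog (f ω) ∂μ = ∫ ω, (μ[negMulLog ∘ f|m]) ω ∂μ := (integral_condExp hm).symm
    _ ≤ ∫ ω, negMulLog ((μ[f|m]) ω) ∂μ :=
      integral_mono_ae integrable_condExp
        (integrable_negMulLog_comp integrable_condExp.1
          ((convex_Icc 0 1).condExp_mem hm hf isClosed_Icc h01))
        (concaveOn_negMulLog.condExp_map_le hm
          (continuous_negMulLog.upperSemicontinuous.upperSemicontinuousOn _)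
          (h01.mono fun _ h => h.1) isClosed_Ici hf hφf)

lemma integral_negMulLog_condExp_le_of_le (hm₂₁ : m₂ ≤ m₁) (hm₁ : m₁ ≤ m0)
    (hf : Integrable f μ) (h01 : ∀ᵐ ω ∂μ, f ω ∈ Icc 0 1) :
    ∫ ω, negMulLog ((μ[f|m₁]) ω) ∂μ ≤ ∫ ω, negMulLog ((μ[f|m₂]) ω) ∂μ := by
  refine (integral_negMulLog_le_integral_negMulLog_condExp (hm₂₁.trans hm₁) integrable_condExp
    ((convex_Icc 0 1).condExp_mem hm₁ hf isClosed_Icc h01)).trans_eq (integral_congr_ae ?_)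
  filter_upwards [condExp_condExp_of_le (f := f) (μ := μ) hm₂₁ hm₁] with ω hω
  rw [hω]

end NegMulLog

section CondEntropy

variable {Ω β γ S : Type*} [MeasurableSpace Ω] [mβ : MeasurableSpace β]
  [mγ : MeasurableSpace γ] [Fintype S] [MeasurableSpace S] [DiscreteMeasurableSpace S]
  [Nonempty S] (μ : Measure Ω) [IsProbabilityMeasure μ] {Y : Ω → S} {Z : Ω → β}

lemma mCondEntropy_eq_sum_integral (hY : Measurable Y) (hZ : Measurable Z) :
    mCondEntropy μ Y Z = ∑ y : S, ∫ ω, negMulLog ((μ⟦Y ⁻¹' {y} | mβ.comap Z⟧) ω) ∂μ := by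
  have hentropy : ∀ y : S, ∀ᵐ ω ∂μ,
      negMulLog ((condDistrib Y Z μ (Z ω) {y}).toReal)
        = negMulLog ((μ⟦Y ⁻¹' {y} | mβ.comap Z⟧) ω) := fun y => by
    filter_upwards [condDistrib_ae_eq_condExp hZ hY (measurableSet_singleton y)] with ω hω
    rw [← hω, measureReal_def]
  have hint : ∀ y : S, Integrable (fun ω => negMulLog ((condDistrib Y Z μ (Z ω) {y}).toReal)) μ :=
    fun y => integrable_negMulLog_comp
      ((Kernel.measurable_coe _ (measurableSet_singleton y)).ennreal_toReal.comp
        hZ).aestronglyMeasurable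
      (ae_of_all _ fun _ => ⟨ENNReal.toReal_nonneg, measureReal_le_one⟩)
  simp only [mCondEntropy, mEntropyOf]
  rw [integral_map hZ.aemeasurable, integral_finsetSum _ fun y _ => hint y]
  · exact Finset.sum_congr rfl fun y _ => integral_congr_ae (hentropy y)
  · exact (Finset.measurable_sum _ fun y _ => continuous_negMulLog.measurable.comp
      (Kernel.measurable_coe _ (measurableSet_singleton y)).ennreal_toReal).aestronglyMeasurable

lemma mCondEntropy_congr {Z' : Ω → β} (h : Z =ᵐ[μ] Z') :
    mCondEntropy μ Y Z = mCondEntropy μ Y Z' := by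
  have hjoint : μ.map (fun ω => (Z ω, Y ω)) = μ.map (fun ω => (Z' ω, Y ω)) :=
    Measure.map_congr (h.mono fun ω hω => by simp only [hω])
  simp only [mCondEntropy, condDistrib, hjoint, Measure.map_congr h]

lemma mCondEntropy_le_comp (hY : Measurable Y) (hZ : Measurable Z) {g : β → γ}
    (hg : Measurable g) : mCondEntropy μ Y Z ≤ mCondEntropy μ Y (g ∘ Z) := by
  have hcomap : mγ.comap (g ∘ Z) ≤ mβ.comap Z := by
    rw [← MeasurableSpace.comap_comp]
    exact MeasurableSpace.comap_mono hg.comap_le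
  rw [mCondEntropy_eq_sum_integral μ hY hZ, mCondEntropy_eq_sum_integral μ hY (hg.comp hZ)]
  refine Finset.sum_le_sum fun y _ => integral_negMulLog_condExp_le_of_le hcomap hZ.comap_le
    ((integrable_const 1).indicator (hY (measurableSet_singleton y))) (ae_of_all _ fun ω => ?_)
  by_cases hω : ω ∈ Y ⁻¹' {y} <;> simp [hω]

end CondEntropy

theorem moe_refinement_info_general {Ω S : Type*} [MeasurableSpace Ω]
    [Fintype S] [MeasurableSpace S] [DiscreteMeasurableSpace S] [Nonempty S]
    (μ : Measure Ω) [IsProbabilityMeasure μ]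
    {d n : ℕ}
    (X : Ω → (Fin d → ℝ)) (hX : Measurable X)
    (Y : Ω → S) (hY : Measurable Y)
    (rm : (Fin d → ℝ) → Fin (n - 1))
    (rn : (Fin d → ℝ) → Fin n) (hrn : Measurable rn)
    (A' : Fin (n - 1) → Matrix (Fin d) (Fin d) ℝ)
    (A : Fin n → Matrix (Fin d) (Fin d) ℝ)
    -- factorization on the support of `X` conditioned on `rn (X) = e`
    (hfact : ∀ e : Fin n, ∃ R : Matrix (Fin d) (Fin d) ℝ,
      ∀ x ∈ measSupport ((μ[|(fun ω => rn (X ω)) ⁻¹' {e}]).map X),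
        (A' (rm x)).mulVec x = R.mulVec ((A e).mulVec x))
    -- identifiability of the routing index from the `n`-expert output
    (hident : ∃ ehat : (Fin d → ℝ) → Fin n, Measurable ehat ∧
      ∀ᵐ ω ∂μ, rn (X ω) = ehat ((A (rn (X ω))).mulVec (X ω))) :
    mMutualInfo μ Y (fun ω => (A' (rm (X ω))).mulVec (X ω))
      ≤ mMutualInfo μ Y (fun ω => (A (rn (X ω))).mulVec (X ω)) := by
  obtain ⟨ehat, hehat, hid⟩ := hident
  choose R hR using hfact
  set Zn : Ω → (Fin d → ℝ) := fun ω => (A (rn (X ω))).mulVec (X ω)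
  have hfactor : (fun ω => (A' (rm (X ω))).mulVec (X ω)) =ᵐ[μ]
      (fun z => (R (ehat z)).mulVec z) ∘ Zn := by
    filter_upwards [hid, ae_of_forall_ae_cond_fiber (hrn.comp hX)
      fun _ => ae_mem_measSupport_map hX.aemeasurable] with ω hω hsupp
    simp only [Function.comp_apply, Zn, ← hω]
    exact hR _ _ hsupp
  rw [mMutualInfo, mMutualInfo, mCondEntropy_congr μ hfactor]
  exact sub_le_sub_left (mCondEntropy_le_comp μ hY (measurable_mulVec_comp A (hrn.comp hX) hX)
    (measurable_mulVec_comp R hehat measurable_id)) _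

/-- more experts cannot reduce label information under refinement. -/
theorem moe_refinement_info {Ω S : Type*} [MeasurableSpace Ω]
    [Fintype S] [MeasurableSpace S] [DiscreteMeasurableSpace S] [Nonempty S]
    (μ : Measure Ω) [IsProbabilityMeasure μ]
    {d n : ℕ} (hn : 2 ≤ n)
    (X : Ω → (Fin d → ℝ)) (hX : Measurable X)
    (Y : Ω → S) (hY : Measurable Y)
    (rm : (Fin d → ℝ) → Fin (n - 1)) (hrm : Measurable rm)
    (rn : (Fin d → ℝ) → Fin n) (hrn : Measurable rn)
    (A' : Fin (n - 1) → Matrix (Fin d) (Fin d) ℝ)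
    (A : Fin n → Matrix (Fin d) (Fin d) ℝ)
    -- factorization on the support of `X` conditioned on `rn (X) = e`
    (hfact : ∀ e : Fin n, ∃ R : Matrix (Fin d) (Fin d) ℝ,
      ∀ x ∈ measSupport ((μ[|(fun ω => rn (X ω)) ⁻¹' {e}]).map X),
        (A' (rm x)).mulVec x = R.mulVec ((A e).mulVec x))
    -- identifiability of the routing index from the `n`-expert output
    (hident : ∃ ehat : (Fin d → ℝ) → Fin n, Measurable ehat ∧
      ∀ᵐ ω ∂μ, rn (X ω) = ehat ((A (rn (X ω))).mulVec (X ω))) :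
    mMutualInfo μ Y (fun ω => (A' (rm (X ω))).mulVec (X ω))
      ≤ mMutualInfo μ Y (fun ω => (A (rn (X ω))).mulVec (X ω)) :=
  moe_refinement_info_general μ X hX Y hY rm rn hrn A' A hfact hident
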